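/- Let h ∈ (0,1) and ρ ∈ (0, h). Then there exists λ̄ ∈ (0, ρ] such that for every λ ∈ (0, λ̄] and every r ≥ 1−ρ one has F_λ'(r) ≥ F'(1−ρ) > 0; in particular min_{r ≥ 1−ρ} |F_λ'(r)| = F'(1−ρ). -/

import Mathlib

/-!
Below the junction `1 - λ` the regularization leaves the derivative untouched, `F_λ' = F'`, and
`F'(r) = r² (r - 1 + h) / (1 - r)` is increasing on `[1 - h, 1)`, so there `F_λ'(r) ≥ F'(1 - ρ)`.
Beyond the junction the quadratic continuation of `-h log(1 - r)` has slope
`h/λ + (h/λ²)(r - (1 - λ)) ≥ h/λ`. The slope of `F̄₂` is at least `-1 - 2h` on `[0, 1)`, and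
for `r ≥ 1` its extra decrease `-(2 + h)(r - 1)` is absorbed by `(h/λ²)(r - 1)` once
`(2 + h) λ² ≤ h`. Hence `F_λ' ≥ h/λ - 1 - 2h ≥ F'(1 - ρ)` there for small `λ`.
-/

/-- The Lennard--Jones potential `F(r) = -h log(1-r) - r³/3 - h (r²/2 + r)`. -/
noncomputable def FLJ (h r : ℝ) : ℝ := -h * Real.log (1 - r) - r^3/3 - h * (r^2/2 + r)

/-- Its first derivative on `[0,1)`: `F'(r) = h/(1-r) - r² - h (r+1)`. -/
noncomputable def FLJ' (h r : ℝ) : ℝ := h/(1-r) - r^2 - h * (r+1)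

/-- Convex singular part `F_{1,λ}` of the regularized Lennard--Jones potential. -/
noncomputable def F1reg (h l r : ℝ) : ℝ :=
  if r < 0 then -r^3/l + h/2 * r^2 + h*r
  else if r < 1 - l then -h * Real.log (1 - r)
  else -h * Real.log l + 3*h/2 - 2*h/l * (1 - r) + h/(2*l^2) * (1 - r)^2

/-- Non-convex regular part `F̄₂` of the regularized Lennard--Jones potential. -/
noncomputable def F2reg (h r : ℝ) : ℝ :=
  if r < 1 then -r^3/3 - h*(r^2/2 + r)
  else -1/3 - 3*h/2 - (1 + 2*h)*(r - 1) - (2 + h)/2 * (r - 1)^2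

/-- The regularized potential `F_λ = F_{1,λ} + F̄₂`. -/
noncomputable def Freg (h l r : ℝ) : ℝ := F1reg h l r + F2reg h r

open Filter Topology Set

theorem hasDerivAt_ite_lt {f g f' g' : ℝ → ℝ} {a x : ℝ}
    (hf : ∀ y ≤ a, HasDerivAt f (f' y) y) (hg : ∀ y ≥ a, HasDerivAt g (g' y) y)
    (hfg : f a = g a) (hfg' : f' a = g' a) :
    HasDerivAt (fun y => if y < a then f y else g y) (if x < a then f' x else g' x) x := by
  rcases lt_trichotomy x a with hxa | rfl | hax
  · rw [if_pos hxa]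
    refine (hf x hxa.le).congr_of_eventuallyEq ?_
    filter_upwards [Iio_mem_nhds hxa] with y hy
    exact if_pos hy
  · rw [if_neg (lt_irrefl x)]
    have hleft : HasDerivWithinAt (fun y => if y < x then f y else g y) (g' x) (Iic x) x := by
      refine (hfg' ▸ hf x le_rfl).hasDerivWithinAt.congr (fun y hy => ?_) (by simp [hfg])
      rcases (mem_Iic.mp hy).lt_or_eq with hyx | rfl
      · rw [if_pos hyx]
      · simp [hfg]
    have hright : HasDerivWithinAt (fun y => if y < x then f y else g y) (g' x) (Ici x) x :=
      (hg x le_rfl).hasDerivWithinAt.congr (fun y hy => if_neg (not_lt.mpr hy)) (by simp)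
    simpa only [Iic_union_Ici, hasDerivWithinAt_univ] using hleft.union hright
  · rw [if_neg (not_lt.mpr hax.le)]
    refine (hg x hax.le).congr_of_eventuallyEq ?_
    filter_upwards [Ioi_mem_nhds hax] with y hy
    exact if_neg (not_lt.mpr (le_of_lt hy))

section Regularization

variable (h l : ℝ)

noncomputable def F1reg' (r : ℝ) : ℝ :=
  if r < 0 then -3*r^2/l + h*r + h
  else if r < 1 - l then h/(1-r)
  else 2*h/l - h/l^2*(1-r)

noncomputable def F2reg' (r : ℝ) : ℝ :=
  if r < 1 then -r^2 - h*(r+1) else -(1+2*h) - (2+h)*(r-1)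

noncomputable def Freg' (r : ℝ) : ℝ := F1reg' h l r + F2reg' h r

theorem hasDerivAt_F2reg (r : ℝ) : HasDerivAt (F2reg h) (F2reg' h r) r := by
  have hcubic (y : ℝ) : HasDerivAt (fun r => -r^3/3 - h*(r^2/2 + r)) (-y^2 - h*(y+1)) y := by
    refine (((hasDerivAt_pow 3 y).fun_neg.div_const 3).fun_sub
      ((((hasDerivAt_pow 2 y).div_const 2).fun_add (hasDerivAt_id' y)).const_mul h)).congr_deriv ?_
    norm_num
    ring
  have hquad (y : ℝ) : HasDerivAt
      (fun r => -1/3 - 3*h/2 - (1 + 2*h)*(r - 1) - (2 + h)/2 * (r - 1)^2)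
      (-(1+2*h) - (2+h)*(y-1)) y := by
    have hs := (hasDerivAt_id' y).sub_const 1
    refine (((hs.const_mul (1+2*h)).const_sub (-1/3 - 3*h/2)).fun_sub
      ((hs.fun_pow 2).const_mul ((2+h)/2))).congr_deriv ?_
    norm_num
    ring
  exact hasDerivAt_ite_lt (fun y _ => hcubic y) (fun y _ => hquad y) (by ring) (by ring)

theorem hasDerivAt_F1reg (hl : 0 < l) (hl1 : l ≤ 1) (r : ℝ) :
    HasDerivAt (F1reg h l) (F1reg' h l r) r := by
  have hcubic (y : ℝ) : HasDerivAt (fun r => -r^3/l + h/2 * r^2 + h*r) (-3*y^2/l + h*y + h) y := by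
    refine ((((hasDerivAt_pow 3 y).fun_neg.div_const l).fun_add
      ((hasDerivAt_pow 2 y).const_mul (h/2))).fun_add ((hasDerivAt_id' y).const_mul h)).congr_deriv ?_
    norm_num
    ring
  have hlog (y : ℝ) (hy : y < 1) : HasDerivAt (fun r => -h * Real.log (1 - r)) (h/(1-y)) y := by
    refine ((((hasDerivAt_id' y).const_sub 1).log (by linarith)).const_mul (-h)).congr_deriv ?_
    ring
  have hquad (y : ℝ) : HasDerivAt
      (fun r => -h * Real.log l + 3*h/2 - 2*h/l * (1 - r) + h/(2*l^2) * (1 - r)^2)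
      (2*h/l - h/l^2*(1-y)) y := by
    have hs := (hasDerivAt_id' y).const_sub 1
    refine (((hs.const_mul (2*h/l)).const_sub (-h * Real.log l + 3*h/2)).fun_add
      ((hs.fun_pow 2).const_mul (h/(2*l^2)))).congr_deriv ?_
    norm_num
    ring
  have hinner (y : ℝ) : HasDerivAt (fun r => if r < 1 - l then -h * Real.log (1 - r) else
      -h * Real.log l + 3*h/2 - 2*h/l * (1 - r) + h/(2*l^2) * (1 - r)^2)
      (if y < 1 - l then h/(1-y) else 2*h/l - h/l^2*(1-y)) y := by
    refine hasDerivAt_ite_lt (fun y hy => hlog y (by linarith)) (fun y _ => hquad y) ?_ ?_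
    · rw [sub_sub_cancel]
      field_simp
      ring
    · rw [sub_sub_cancel]
      field_simp
      ring
  refine hasDerivAt_ite_lt (fun y _ => hcubic y) (fun y _ => hinner y) ?_ ?_
  · rcases hl1.lt_or_eq with hl1 | rfl
    · simp [sub_pos.mpr hl1]
    · norm_num
      ring
  · rcases hl1.lt_or_eq with hl1 | rfl
    · simp [sub_pos.mpr hl1]
    · norm_num
      ring

theorem hasDerivAt_Freg (hl : 0 < l) (hl1 : l ≤ 1) (r : ℝ) :
    HasDerivAt (Freg h l) (Freg' h l r) r :=
  (hasDerivAt_F1reg h l hl hl1 r).add (hasDerivAt_F2reg h r)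

theorem FLJ'_eq_div {r : ℝ} (hr : r ≠ 1) : FLJ' h r = r^2 * (r - 1 + h) / (1 - r) := by
  have : 1 - r ≠ 0 := sub_ne_zero.mpr hr.symm
  rw [FLJ']
  field_simp
  ring

theorem FLJ'_pos (hh : h ≤ 1) {r : ℝ} (hr : r ∈ Ioo (1 - h) 1) : 0 < FLJ' h r := by
  obtain ⟨hr0, hr1⟩ := hr
  rw [FLJ'_eq_div h hr1.ne]
  have : 0 < r := by linarith
  have : 0 < 1 - r := by linarith
  have : 0 < r - 1 + h := by linarith
  positivity

theorem monotoneOn_FLJ' (hh : h ≤ 1) : MonotoneOn (FLJ' h) (Ico (1 - h) 1) := by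
  rintro a ⟨ha0, ha1⟩ b ⟨hb0, hb1⟩ hab
  rw [FLJ'_eq_div h ha1.ne, FLJ'_eq_div h hb1.ne]
  have : 0 ≤ a := by linarith
  have : 0 ≤ a - 1 + h := by linarith
  have : 0 < 1 - b := by linarith
  have : 0 ≤ b ^ 2 * (b - 1 + h) := mul_nonneg (sq_nonneg b) (by linarith)
  gcongr

theorem Freg'_eq_FLJ' (hl : 0 < l) {r : ℝ} (hr0 : 0 ≤ r) (hr : r ≤ 1 - l) :
    Freg' h l r = FLJ' h r := by
  have hr1 : r < 1 := by linarith
  rw [Freg', F1reg', F2reg', FLJ', if_neg hr0.not_gt, if_pos hr1]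
  rcases hr.lt_or_eq with hr | rfl
  · rw [if_pos hr]
    ring
  · rw [if_neg (lt_irrefl _), sub_sub_cancel]
    field_simp
    ring

theorem le_Freg'_of_one_sub_le (hh : 0 ≤ h) (hl : 0 < l) (hl1 : l ≤ 1)
    (hl2 : (2 + h) * l ^ 2 ≤ h) {r : ℝ} (hr : 1 - l ≤ r) :
    h / l - 1 - 2 * h ≤ Freg' h l r := by
  have hr0 : 0 ≤ r := by linarith
  have hhl : 0 ≤ h / l := by positivity
  have hsplit : 2 * h / l - h / l ^ 2 * (1 - r) = h / l + h / l ^ 2 * (r - (1 - l)) := by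
    field_simp
    ring
  rw [Freg', F1reg', F2reg', if_neg hr0.not_gt, if_neg hr.not_gt, hsplit]
  split_ifs with hr1
  · have : 0 ≤ h / l ^ 2 * (r - (1 - l)) := by
      have := sub_nonneg.mpr hr
      positivity
    nlinarith
  · have hquad : 2 + h ≤ h / l ^ 2 := by rwa [le_div_iff₀ (by positivity)]
    nlinarith

end Regularization

/-- For `ρ ∈ (0,h)` there is `λ̄ ∈ (0,ρ]` such that for all `λ ∈ (0,λ̄]` and all
`r ≥ 1-ρ` one has `F_λ'(r) ≥ F'(1-ρ) > 0`; in particular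
`min_{r ≥ 1-ρ} |F_λ'(r)| = F'(1-ρ)`. -/
theorem Freg_deriv_lower_bound_near_one (h ρ : ℝ)
    (hh : h ∈ Set.Ioo (0:ℝ) 1) (hρ : ρ ∈ Set.Ioo (0:ℝ) h) :
    ∃ lb ∈ Set.Ioc (0:ℝ) ρ, ∀ l ∈ Set.Ioc (0:ℝ) lb,
      (∀ r : ℝ, 1 - ρ ≤ r → FLJ' h (1 - ρ) ≤ deriv (Freg h l) r) ∧
      0 < FLJ' h (1 - ρ) ∧
      IsLeast ((fun r => |deriv (Freg h l) r|) '' Set.Ici (1 - ρ)) (FLJ' h (1 - ρ)) := by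
  obtain ⟨hh0, hh1⟩ := hh
  obtain ⟨hρ0, hρh⟩ := hρ
  set C := FLJ' h (1 - ρ)
  have hC : 0 < C := FLJ'_pos h hh1.le ⟨by linarith, by linarith⟩
  have hK : 0 < C + 2 + 2 * h := by linarith
  refine ⟨min ρ (h / (C + 2 + 2 * h)), ⟨lt_min hρ0 (by positivity), min_le_left _ _⟩, ?_⟩
  rintro l ⟨hl0, hl⟩
  have hlρ : l ≤ ρ := hl.trans (min_le_left _ _)
  have hlK : (C + 2 + 2 * h) * l ≤ h := by
    rw [← le_div_iff₀' hK]
    exact hl.trans (min_le_right _ _)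
  have hl1 : l ≤ 1 := by linarith
  have hderiv (r : ℝ) : deriv (Freg h l) r = Freg' h l r := (hasDerivAt_Freg h l hl0 hl1 r).deriv
  have hbound (r : ℝ) (hr : 1 - ρ ≤ r) : C ≤ deriv (Freg h l) r := by
    rw [hderiv]
    rcases le_or_gt r (1 - l) with hrl | hrl
    · rw [Freg'_eq_FLJ' h l hl0 (by linarith) hrl]
      exact monotoneOn_FLJ' h hh1.le ⟨by linarith, by linarith⟩ ⟨by linarith, by linarith⟩ hr
    · have hl2 : (2 + h) * l ^ 2 ≤ h := by nlinarith
      have hslope : C + 2 + 2 * h ≤ h / l := by rwa [le_div_iff₀ hl0]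
      linarith [le_Freg'_of_one_sub_le h l hh0.le hl0 hl1 hl2 hrl.le]
  have hattained : deriv (Freg h l) (1 - ρ) = C := by
    rw [hderiv, Freg'_eq_FLJ' h l hl0 (by linarith) (by linarith)]
  refine ⟨hbound, hC, ⟨⟨1 - ρ, self_mem_Ici, by simp only [hattained, abs_of_pos hC]⟩, ?_⟩⟩
  rintro _ ⟨r, hr, rfl⟩
  exact (hbound r hr).trans (le_abs_self _)
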